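/- arXiv:2206.08820 — 3 statements merged into one kernel-verified Lean document; each statement's English description precedes it below -/
import Mathlib

section
/- Let a, q : ℝ → ℝ satisfy the standing assumptions and assume additionally that a(x) > 0 for almost every x ∈ ℝ. Let b ∈ ℝ with b ≠ 0, and let u : ℝ → ℂ be twice continuously differentiable with u, u', u'', q·u and a·u all in L²(ℝ; ℂ). If −u''(x) + q(x)·u(x) + 2i·b·a(x)·u(x) − b²·u(x) = 0 for every x ∈ ℝ, then u = 0. (This says the quadratic operator family T(λ) has no kernel for purely imaginary λ = ib, b ≠ 0; it is the key step showing that the generator of the damped wave equation has no eigenvalues on the imaginary axis.) -/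
open MeasureTheory Filter
open scoped ENNReal

/-- The quadratic operator family `T(λ)u = -u'' + q·u + 2λ·a·u + λ²·u`. -/
noncomputable def Tq (a q : ℝ → ℝ) (lam : ℂ) (u : ℝ → ℂ) : ℝ → ℂ :=
  fun x => -deriv (deriv u) x + (q x : ℂ) * u x + 2 * lam * (a x : ℂ) * u x + lam ^ 2 * u x

/-- Standing assumptions on the damping `a` and the potential `q`. -/
structure Standing (a q : ℝ → ℝ) : Prop where
  smooth_a : ContDiff ℝ (⊤ : ℕ∞) a
  smooth_q : ContDiff ℝ (⊤ : ℕ∞) q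
  nonneg_a : ∀ x, 0 ≤ a x
  nonneg_q : ∀ x, 0 ≤ q x
  unbounded_a : Tendsto a (cocompact ℝ) atTop
  deriv_a : ∀ n : ℕ, 1 ≤ n → ∃ C : ℝ, 0 < C ∧ ∀ x : ℝ,
      |iteratedDeriv n a x| ≤ C * (1 + a x) * (1 + x ^ 2) ^ (-(n : ℝ) / 2)
  deriv_q : ∀ n : ℕ, 1 ≤ n → ∃ C : ℝ, 0 < C ∧ ∀ x : ℝ,
      |iteratedDeriv n q x| ≤ C * (1 + q x) * (1 + x ^ 2) ^ (-(n : ℝ) / 2)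
  q_le_a : ∃ K₀ : ℝ, 0 < K₀ ∧ ∃ x₀ : ℝ, 0 < x₀ ∧ ∀ x : ℝ, x₀ < |x| → q x ≤ K₀ * a x

/-- A monotone integrable function on ℝ is identically zero. -/
lemma monotone_integrable_eq_zero {V : ℝ → ℝ} (hmono : Monotone V)
    (hint : Integrable V volume) : ∀ x, V x = 0 := by
  intro x
  rcases lt_trichotomy (V x) 0 with hneg | h0 | hpos
  · exfalso
    have hIic : IntegrableOn V (Set.Iic x) volume := hint.integrableOn
    have hconst : IntegrableOn (fun _ : ℝ => V x) (Set.Iic x) volume := by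
      refine Integrable.mono' hint.integrableOn.neg ?_ ?_
      · exact aestronglyMeasurable_const
      · refine (ae_restrict_iff' measurableSet_Iic).2 (Eventually.of_forall fun y hy => ?_)
        have hVle : V y ≤ V x := hmono hy
        simp only [Pi.neg_apply]
        rw [Real.norm_eq_abs, abs_of_neg hneg]
        linarith
    rw [IntegrableOn, integrable_const_iff] at hconst
    rcases hconst with h | h
    · exact hneg.ne h
    · have h := h.measure_univ_lt_top
      simp [Measure.restrict_apply_univ, Real.volume_Iic] at h
  · exact h0
  · exfalso
    have hconst : IntegrableOn (fun _ : ℝ => V x) (Set.Ici x) volume := by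
      refine Integrable.mono' hint.integrableOn ?_ ?_
      · exact aestronglyMeasurable_const
      · refine (ae_restrict_iff' measurableSet_Ici).2 (Eventually.of_forall fun y hy => ?_)
        have : V x ≤ V y := hmono hy
        rw [Real.norm_eq_abs, abs_of_pos hpos]
        exact this
    rw [IntegrableOn, integrable_const_iff] at hconst
    rcases hconst with h | h
    · exact hpos.ne' h
    · have h := h.measure_univ_lt_top
      simp [Measure.restrict_apply_univ, Real.volume_Ici] at h

theorem stmt13 (a q : ℝ → ℝ) (h : Standing a q)
    (ha : ∀ᵐ x : ℝ, 0 < a x)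
    (b : ℝ) (hb : b ≠ 0) (u : ℝ → ℂ)
    (hu : ContDiff ℝ 2 u)
    (hL2u : MemLp u 2 volume)
    (hL2u' : MemLp (deriv u) 2 volume)
    (hL2u'' : MemLp (deriv (deriv u)) 2 volume)
    (hL2qu : MemLp (fun x => (q x : ℂ) * u x) 2 volume)
    (hL2au : MemLp (fun x => (a x : ℂ) * u x) 2 volume)
    (heq : ∀ x : ℝ,
      -deriv (deriv u) x + (q x : ℂ) * u x + 2 * Complex.I * (b : ℂ) * (a x : ℂ) * u x
        - (b : ℂ) ^ 2 * u x = 0) :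
    u = 0 := by
  -- basic regularity
  have hu2 : ContDiff ℝ (1 + 1) u := by norm_num; exact hu
  have hdu : Differentiable ℝ u := hu.differentiable (by norm_num)
  have hdu' : ContDiff ℝ 1 (deriv u) := (contDiff_succ_iff_deriv.mp hu2).2.2
  have hddu : Differentiable ℝ (deriv u) := hdu'.differentiable one_ne_zero
  -- W = Im (u' * conj u), scaled by b
  set V : ℝ → ℝ := fun x => b * (deriv u x * (starRingEnd ℂ) (u x)).im with hV
  -- derivative of V
  have hVderiv : ∀ x, HasDerivAt V (2 * b ^ 2 * a x * Complex.normSq (u x)) x := by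
    intro x
    have h1 : HasDerivAt u (deriv u x) x := (hdu x).hasDerivAt
    have h2 : HasDerivAt (deriv u) (deriv (deriv u) x) x := (hddu x).hasDerivAt
    have hconj : HasDerivAt (fun y => (starRingEnd ℂ) (u y)) ((starRingEnd ℂ) (deriv u x)) x :=
      h1.star
    have hmul : HasDerivAt (fun y => deriv u y * (starRingEnd ℂ) (u y))
        (deriv (deriv u) x * (starRingEnd ℂ) (u x)
          + deriv u x * (starRingEnd ℂ) (deriv u x)) x := h2.mul hconj
    have him : HasDerivAt (fun y => (deriv u y * (starRingEnd ℂ) (u y)).im)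
        ((deriv (deriv u) x * (starRingEnd ℂ) (u x)
          + deriv u x * (starRingEnd ℂ) (deriv u x)).im) x :=
      (Complex.imCLM.hasFDerivAt.comp_hasDerivAt x hmul)
    have hVd : HasDerivAt V (b * (deriv (deriv u) x * (starRingEnd ℂ) (u x)
          + deriv u x * (starRingEnd ℂ) (deriv u x)).im) x := him.const_mul b
    convert hVd using 1
    have huu : deriv (deriv u) x =
        (q x : ℂ) * u x + 2 * Complex.I * (b : ℂ) * (a x : ℂ) * u x - (b : ℂ) ^ 2 * u x := by
      have := heq x; linear_combination -this
    rw [huu]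
    rw [Complex.mul_conj (deriv u x)]
    have hn : ((q x : ℂ) * u x + 2 * Complex.I * (b : ℂ) * (a x : ℂ) * u x
        - (b : ℂ) ^ 2 * u x) * (starRingEnd ℂ) (u x)
        = ((q x : ℂ) + 2 * Complex.I * (b : ℂ) * (a x : ℂ) - (b : ℂ) ^ 2)
          * (Complex.normSq (u x) : ℂ) := by
      rw [← Complex.mul_conj (u x)]; ring
    rw [hn]
    simp [Complex.add_im, Complex.sub_im, Complex.mul_im, ← Complex.ofReal_pow]
    ring
  -- V is monotone
  have hmono : Monotone V :=
    monotone_of_deriv_nonneg (fun x => (hVderiv x).differentiableAt)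
      (fun x => by
        rw [(hVderiv x).deriv]
        exact mul_nonneg (mul_nonneg (by positivity) (h.nonneg_a x))
          (Complex.normSq_nonneg _))
  -- V is integrable
  have hVcont : Continuous V := by
    have h1 : Continuous (deriv u) := hdu'.continuous
    have h2 : Continuous u := hu.continuous
    exact continuous_const.mul
      (Complex.continuous_im.comp (h1.mul (continuous_star.comp h2)))
  have hintnn : Integrable (fun x => ‖deriv u x‖ * ‖u x‖) volume := by
    have h1 : MemLp (fun x => ‖deriv u x‖) 2 volume := hL2u'.norm
    have h2 : MemLp (fun x => ‖u x‖) 2 volume := hL2u.norm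
    have := h2.smul (p := 2) (q := 2) (r := 1) h1 (hpqr := ⟨by simp [ENNReal.inv_two_add_inv_two]⟩)
    rw [memLp_one_iff_integrable] at this
    simpa [smul_eq_mul, Pi.mul_def] using this
  have hVint : Integrable V volume := by
    refine Integrable.mono' (hintnn.const_mul |b|) hVcont.aestronglyMeasurable ?_
    refine Eventually.of_forall fun x => ?_
    rw [hV]
    calc ‖b * (deriv u x * (starRingEnd ℂ) (u x)).im‖
        = |b| * |(deriv u x * (starRingEnd ℂ) (u x)).im| := by
          rw [Real.norm_eq_abs, abs_mul]
      _ ≤ |b| * ‖deriv u x * (starRingEnd ℂ) (u x)‖ := by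
          gcongr; exact Complex.abs_im_le_norm _
      _ = |b| * (‖deriv u x‖ * ‖u x‖) := by
          rw [norm_mul]; simp
  -- conclude V ≡ 0, hence its derivative is 0 everywhere
  have hV0 : ∀ x, V x = 0 := monotone_integrable_eq_zero hmono hVint
  have hderiv0 : ∀ x, 2 * b ^ 2 * a x * Complex.normSq (u x) = 0 := by
    intro x
    have hc : HasDerivAt V 0 x := by
      have : V = fun _ => (0 : ℝ) := funext hV0
      rw [this]; exact hasDerivAt_const x 0
    exact (hVderiv x).unique hc
  -- a.e. positivity of a gives u = 0 a.e.
  have hae : u =ᵐ[volume] 0 := by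
    filter_upwards [ha] with x hax
    have hns : Complex.normSq (u x) = 0 := by
      have hpos : (0 : ℝ) < 2 * b ^ 2 * a x := mul_pos (by positivity) hax
      rcases mul_eq_zero.mp (hderiv0 x) with h1 | h2
      · exact absurd h1 hpos.ne'
      · exact h2
    simpa using Complex.normSq_eq_zero.mp hns
  have hc0 : Continuous u := hu.continuous
  exact (Continuous.ae_eq_iff_eq (μ := volume) hc0 continuous_const).mp hae
end

section
/- Let κ > 0 and n ∈ ℕ, let y_n := 2^{−2/3}·(2n+1)^{4/3}·( ((1 + κ_n)^{1/2} + 1)^{1/3} − ((1 + κ_n)^{1/2} − 1)^{1/3} ) with κ_n := (16/27)·κ³·(2n+1)^{−2}, and set y_{n,±} := (4·(2n+1)²·(2y_n)^{−3/2} ± 1)^{1/2} (both well-defined nonnegative reals). Define the four complex numbers λ₁ := (1/2)·(2y_n)^{1/2}·(1 − y_{n,−}), λ₂ := (1/2)·(2y_n)^{1/2}·(1 + y_{n,−}), λ₃ := −(1/2)·(2y_n)^{1/2}·(1 − i·y_{n,+}), and λ₄ := conjugate of λ₃. Then: (a) each λ_j satisfies λ⁴ − 2·(2n+1)²·λ −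 (2n+1)²·κ = 0; (b) λ₁ is real and lies in the open interval (−κ/2, 0); (c) Re λ₃ = −(1/2)·(2y_n)^{1/2} and −2^{−2/3}·(2n+1)^{2/3} < Re λ₃ < 0. -/
/-!
Ferrari's method. If `s ≠ 0` satisfies the resolvent relation `s⁶ + 4m²κs² = 4m⁴`, then
`λ⁴ - 2m²λ - m²κ = (λ² + s²/2)² - (sλ + m²/s)²` splits into the two quadratics
`λ² ∓ sλ + s²/2 ∓ m²/s`, whose roots are the four `λⱼ`. With `s = √(2yₙ)` the relation is
`2y³ + 2m²κy = m⁴`, a depressed cubic solved by Cardano's formula, which is how `yₙ` is defined.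
Since `κ > 0` the relation forces `s³ < 2m²`, which gives the sign and size of `λ₁` and `Re λ₃`.
-/

theorem Real.rpow_div_three_pow {x : ℝ} (hx : 0 ≤ x) (r : ℝ) : (x ^ (r / 3)) ^ 3 = x ^ r := by
  rw [← Real.rpow_natCast, ← Real.rpow_mul hx]
  norm_num

theorem Real.rpow_neg_three_div_two {x : ℝ} (hx : 0 ≤ x) : x ^ (-(3 : ℝ) / 2) = (√x ^ 3)⁻¹ := by
  rw [Real.sqrt_eq_rpow, ← Real.rpow_natCast, ← Real.rpow_mul hx, ← Real.rpow_neg hx]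
  norm_num

noncomputable def cardanoRoot (t : ℝ) : ℝ :=
  ((1 + t) ^ ((1 : ℝ) / 2) + 1) ^ ((1 : ℝ) / 3) - ((1 + t) ^ ((1 : ℝ) / 2) - 1) ^ ((1 : ℝ) / 3)

theorem cardanoRoot_spec {t : ℝ} (ht : 0 ≤ t) :
    0 < cardanoRoot t ∧ cardanoRoot t ^ 3 + 3 * t ^ ((1 : ℝ) / 3) * cardanoRoot t = 2 := by
  unfold cardanoRoot
  rw [← Real.sqrt_eq_rpow]
  set r := √(1 + t)
  have hr : r ^ 2 = 1 + t := Real.sq_sqrt (by linarith)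
  have hr1 : 1 ≤ r := Real.one_le_sqrt.mpr (by linarith)
  set a := (r + 1) ^ ((1 : ℝ) / 3)
  set b := (r - 1) ^ ((1 : ℝ) / 3)
  have ha : a ^ 3 = r + 1 := by rw [Real.rpow_div_three_pow (by linarith), Real.rpow_one]
  have hb : b ^ 3 = r - 1 := by rw [Real.rpow_div_three_pow (by linarith), Real.rpow_one]
  have hab : t ^ ((1 : ℝ) / 3) = a * b := by
    refine (pow_left_inj₀ (by positivity) (by positivity) three_ne_zero).mp ?_
    rw [Real.rpow_div_three_pow ht, Real.rpow_one, mul_pow, ha, hb]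
    linear_combination -hr
  refine ⟨sub_pos.mpr (lt_of_pow_lt_pow_left₀ 3 (by positivity) (by linarith)), ?_⟩
  rw [hab]
  linear_combination ha - hb

theorem resolvent_cubic {κ m y : ℝ} (hκ : 0 ≤ κ) (hm : 0 < m)
    (hy : y = (2 : ℝ) ^ (-(2 : ℝ) / 3) * m ^ ((4 : ℝ) / 3) * cardanoRoot (16 / 27 * κ ^ 3 / m ^ 2)) :
    0 < y ∧ 2 * y ^ 3 + 2 * m ^ 2 * κ * y = m ^ 4 := by
  set C := (2 : ℝ) ^ (-(2 : ℝ) / 3) * m ^ ((4 : ℝ) / 3)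
  set t := 16 / 27 * κ ^ 3 / m ^ 2 with ht
  have hC : C ^ 3 = m ^ 4 / 4 := by
    rw [mul_pow, Real.rpow_div_three_pow (by norm_num), Real.rpow_div_three_pow hm.le]
    norm_num
    ring
  obtain ⟨hz, hcubic⟩ := cardanoRoot_spec (t := t) (by positivity)
  have hc : 3 * t ^ ((1 : ℝ) / 3) * m ^ 2 = 4 * κ * C := by
    refine (pow_left_inj₀ (by positivity) (by positivity) three_ne_zero).mp ?_
    rw [mul_pow, mul_pow, Real.rpow_div_three_pow (by positivity), Real.rpow_one, mul_pow, hC, ht]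
    field_simp
    ring
  refine ⟨hy ▸ by positivity, ?_⟩
  subst hy
  linear_combination (2 * cardanoRoot t ^ 3) * hC + m ^ 4 / 2 * hcubic - (m ^ 2 / 2 * cardanoRoot t) * hc

theorem sqrt_two_mul_resolvent {κ m y : ℝ} (hy : 0 ≤ y) (h : 2 * y ^ 3 + 2 * m ^ 2 * κ * y = m ^ 4) :
    √(2 * y) ^ 6 + 4 * m ^ 2 * κ * √(2 * y) ^ 2 = 4 * m ^ 4 := by
  rw [show √(2 * y) ^ 6 = (√(2 * y) ^ 2) ^ 3 by ring, Real.sq_sqrt (by linarith)]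
  linear_combination 4 * h

section Ferrari

variable {K : Type*} [Field K] [NeZero (2 : K)]

def ferrariFactor (m s x : K) : K := x ^ 2 - s * x + (s ^ 2 / 2 - m ^ 2 / s)

theorem quartic_eq_ferrariFactor_mul {m κ s : K} (hs : s ≠ 0)
    (h : s ^ 6 + 4 * m ^ 2 * κ * s ^ 2 = 4 * m ^ 4) (x : K) :
    x ^ 4 - 2 * m ^ 2 * x - m ^ 2 * κ = ferrariFactor m s x * ferrariFactor m (-s) x := by
  unfold ferrariFactor
  field_simp
  linear_combination (-1 : K) * h

theorem ferrariFactor_eq_zero {m s u x : K} (hs : s ≠ 0) (hu : s ^ 3 * (1 + u ^ 2) = 4 * m ^ 2)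
    (hx : x = 1 / 2 * s * (1 - u)) : ferrariFactor m s x = 0 := by
  unfold ferrariFactor
  subst hx
  field_simp
  linear_combination hu

theorem quartic_eq_zero_of_ferrari {m κ s u x : K} (hs : s ≠ 0)
    (h : s ^ 6 + 4 * m ^ 2 * κ * s ^ 2 = 4 * m ^ 4) (hu : s ^ 3 * (1 + u ^ 2) = 4 * m ^ 2)
    (hx : x = 1 / 2 * s * (1 - u)) : x ^ 4 - 2 * m ^ 2 * x - m ^ 2 * κ = 0 := by
  rw [quartic_eq_ferrariFactor_mul hs h, ferrariFactor_eq_zero hs hu hx, zero_mul]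

end Ferrari

theorem quartic_eq_zero_of_ferrari_complex {m κ s v : ℝ} (hs : s ≠ 0)
    (h : s ^ 6 + 4 * m ^ 2 * κ * s ^ 2 = 4 * m ^ 4) (hv : s ^ 3 * (v ^ 2 - 1) = 4 * m ^ 2)
    {x : ℂ} (hx : x = -(1 / 2 : ℂ) * s * (1 - Complex.I * v)) :
    x ^ 4 - 2 * (m : ℂ) ^ 2 * x - (m : ℂ) ^ 2 * κ = 0 := by
  have hC : (s : ℂ) ^ 6 + 4 * (m : ℂ) ^ 2 * κ * (s : ℂ) ^ 2 = 4 * (m : ℂ) ^ 4 := by exact_mod_cast h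
  have hvC : (s : ℂ) ^ 3 * ((v : ℂ) ^ 2 - 1) = 4 * (m : ℂ) ^ 2 := by exact_mod_cast hv
  refine quartic_eq_zero_of_ferrari (s := -(s : ℂ)) (u := Complex.I * v) (by simpa using hs)
    (by linear_combination hC) ?_ (by rw [hx]; ring)
  linear_combination (-(s : ℂ) ^ 3 * v ^ 2) * Complex.I_sq + hvC

section Ordered

variable {K : Type*} [Field K] [LinearOrder K] [IsStrictOrderedRing K]

theorem neg_half_lt_of_quartic_eq_zero {m κ x : K} (hm : m ≠ 0) (hx : x ≠ 0)
    (h : x ^ 4 - 2 * m ^ 2 * x - m ^ 2 * κ = 0) : -κ / 2 < x := by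
  have hx4 : 0 < x ^ 4 := by positivity
  have hm2 : 0 < m ^ 2 := by positivity
  nlinarith

theorem pow_three_lt_of_ferrari {m κ s : K} (hκ : 0 < κ) (hm : m ≠ 0) (hs : 0 < s)
    (h : s ^ 6 + 4 * m ^ 2 * κ * s ^ 2 = 4 * m ^ 4) : s ^ 3 < 2 * m ^ 2 := by
  have : 0 < 4 * m ^ 2 * κ * s ^ 2 := by positivity
  exact lt_of_pow_lt_pow_left₀ 2 (by positivity) (by linear_combination this + h)

end Ordered

theorem mul_one_add_sq_sqrt_mul_inv_sub_one {a b : ℝ} (ha : 0 < a) (hab : a ≤ b) :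
    a * (1 + √(b * a⁻¹ - 1) ^ 2) = b := by
  rw [Real.sq_sqrt (by rw [sub_nonneg, le_mul_inv_iff₀ ha]; linarith)]
  field_simp
  ring

theorem mul_sq_sqrt_mul_inv_add_one_sub_one {a b : ℝ} (ha : 0 < a) (hb : 0 ≤ b) :
    a * (√(b * a⁻¹ + 1) ^ 2 - 1) = b := by
  rw [Real.sq_sqrt (by positivity)]
  field_simp
  ring

theorem neg_rpow_lt_neg_half {m s : ℝ} (hm : 0 ≤ m) (hs : s ^ 3 < 2 * m ^ 2) :
    -(2 : ℝ) ^ (-(2 : ℝ) / 3) * m ^ ((2 : ℝ) / 3) < -(1 / 2) * s := by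
  suffices s < 2 * ((2 : ℝ) ^ (-(2 : ℝ) / 3) * m ^ ((2 : ℝ) / 3)) by linarith
  refine lt_of_pow_lt_pow_left₀ 3 (by positivity) ?_
  rw [mul_pow, mul_pow, Real.rpow_div_three_pow (by norm_num), Real.rpow_div_three_pow hm]
  norm_num
  linarith

theorem stmt16 (κ : ℝ) (hκ : 0 < κ) (n : ℕ) (m κn yn ynm ynp : ℝ)
    (lam₁ lam₂ : ℝ) (lam₃ lam₄ : ℂ)
    (hm : m = 2 * (n : ℝ) + 1)
    (hκn : κn = 16 / 27 * κ ^ 3 / m ^ 2)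
    (hyn : yn = (2 : ℝ) ^ (-(2 : ℝ) / 3) * m ^ ((4 : ℝ) / 3) *
        (((1 + κn) ^ ((1 : ℝ) / 2) + 1) ^ ((1 : ℝ) / 3)
          - ((1 + κn) ^ ((1 : ℝ) / 2) - 1) ^ ((1 : ℝ) / 3)))
    (hynm : ynm = Real.sqrt (4 * m ^ 2 * (2 * yn) ^ (-(3 : ℝ) / 2) - 1))
    (hynp : ynp = Real.sqrt (4 * m ^ 2 * (2 * yn) ^ (-(3 : ℝ) / 2) + 1))
    (hl1 : lam₁ = 1 / 2 * Real.sqrt (2 * yn) * (1 - ynm))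
    (hl2 : lam₂ = 1 / 2 * Real.sqrt (2 * yn) * (1 + ynm))
    (hl3 : lam₃ = -(1 / 2 : ℂ) * (Real.sqrt (2 * yn) : ℂ) * (1 - Complex.I * (ynp : ℂ)))
    (hl4 : lam₄ = starRingEnd ℂ lam₃) :
    ((lam₁ : ℂ) ^ 4 - 2 * (m : ℂ) ^ 2 * (lam₁ : ℂ) - (m : ℂ) ^ 2 * (κ : ℂ) = 0 ∧
      (lam₂ : ℂ) ^ 4 - 2 * (m : ℂ) ^ 2 * (lam₂ : ℂ) - (m : ℂ) ^ 2 * (κ : ℂ) = 0 ∧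
      lam₃ ^ 4 - 2 * (m : ℂ) ^ 2 * lam₃ - (m : ℂ) ^ 2 * (κ : ℂ) = 0 ∧
      lam₄ ^ 4 - 2 * (m : ℂ) ^ 2 * lam₄ - (m : ℂ) ^ 2 * (κ : ℂ) = 0) ∧
    (-κ / 2 < lam₁ ∧ lam₁ < 0) ∧
    (lam₃.re = -(1 / 2) * Real.sqrt (2 * yn) ∧
      -(2 : ℝ) ^ (-(2 : ℝ) / 3) * m ^ ((2 : ℝ) / 3) < lam₃.re ∧ lam₃.re < 0) := by
  have hm0 : 0 < m := by rw [hm]; positivity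
  obtain ⟨hy, hcubic⟩ := resolvent_cubic hκ.le hm0 (hκn ▸ hyn)
  have hs6 := sqrt_two_mul_resolvent hy.le hcubic
  set s := √(2 * yn) with hs_def
  have hs : 0 < s := Real.sqrt_pos.mpr (by linarith)
  have hs3 := pow_three_lt_of_ferrari hκ hm0.ne' hs hs6
  rw [Real.rpow_neg_three_div_two (by linarith), ← hs_def] at hynm hynp
  have hu : s ^ 3 * (1 + ynm ^ 2) = 4 * m ^ 2 :=
    hynm ▸ mul_one_add_sq_sqrt_mul_inv_sub_one (by positivity) (by linarith [pow_pos hm0 2])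
  have hv : s ^ 3 * (ynp ^ 2 - 1) = 4 * m ^ 2 :=
    hynp ▸ mul_sq_sqrt_mul_inv_add_one_sub_one (by positivity) (by positivity)
  have hynm1 : 1 < ynm := by
    rw [hynm, Real.lt_sqrt zero_le_one, lt_sub_iff_add_lt, lt_mul_inv_iff₀ (by positivity)]
    linarith
  have h1 := quartic_eq_zero_of_ferrari hs.ne' hs6 hu hl1
  have h2 := quartic_eq_zero_of_ferrari hs.ne' hs6 (u := -ynm) (x := lam₂) (by rwa [neg_sq])
    (by rw [hl2]; ring)
  have h3 := quartic_eq_zero_of_ferrari_complex hs.ne' hs6 hv hl3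
  have hre : lam₃.re = -(1 / 2) * s := by simp [hl3]
  have hlam1 : lam₁ < 0 := by rw [hl1]; nlinarith
  refine ⟨⟨by exact_mod_cast h1, by exact_mod_cast h2, h3, ?_⟩,
    ⟨neg_half_lt_of_quartic_eq_zero hm0.ne' hlam1.ne h1, hlam1⟩,
    hre, hre ▸ neg_rpow_lt_neg_half hm0.le hs3, by rw [hre]; linarith⟩
  simpa [hl4, map_ofNat] using congrArg (starRingEnd ℂ) h3
end

section
/- Let κ > 0. For n ∈ ℕ, let y_n := 2^{−2/3}·(2n+1)^{4/3}·( ((1 + κ_n)^{1/2} + 1)^{1/3} − ((1 + κ_n)^{1/2} − 1)^{1/3} ) with κ_n := (16/27)·κ³·(2n+1)^{−2}, let y_{n,+} := (4·(2n+1)²·(2y_n)^{−3/2} + 1)^{1/2}, and let λ_n^i := −(1/2)·(2y_n)^{1/2}·(1 − i·y_{n,+}) (the non-real root of λ⁴ − 2(2n+1)²λ − (2n+1)²κ = 0 in the upper half-plane). Then lim_{n→∞} ( |λ_n^i| − 2^{1/3}·(2n+1)^{2/3} ) = −κ/12, and the argument of λ_n^i (taken in (0, π)) converges to 2π/3 as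 n → ∞. -/
/-!
Put `X = 2n + 1` and `t = X^(-2/3)`, so that `κ_n = c t³` with `c = 16κ³/27`. Rationalising the
second cube root gives `y_n = X^(4/3) f(t)` for a function `f = cardanoProfile c` that is
differentiable at `t = 0` with `f 0 = 2^(-1/3)`. In terms of `u = f(t)` one then has
`|λ_n| = X^(2/3) √(u + (2u)^(-1/2))` and `arg λ_n = π - arctan √(4 (2u)^(-3/2) + 1)`.
Hence `|λ_n| - 2^(1/3) X^(2/3)` is the difference quotient at `0` of
`t ↦ √(f t + (2 f t)^(-1/2))`, whose derivative there is `-κ/12`, and the argument tends to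
`π - arctan √3 = 2π/3`.
-/

open Filter Real Topology

noncomputable section

-- `(√(1 + c t³) - 1)^(1/3)` is written as `t (c / (√(1 + c t³) + 1))^(1/3)`, which is
-- differentiable at `t = 0`.
def cardanoProfile (c t : ℝ) : ℝ :=
  2 ^ (-(2 : ℝ) / 3) * ((√(1 + c * t ^ 3) + 1) ^ ((1 : ℝ) / 3)
    - t * (c / (√(1 + c * t ^ 3) + 1)) ^ ((1 : ℝ) / 3))

def modulusProfile (u : ℝ) : ℝ := √(u + (2 * u) ^ (-(1 : ℝ) / 2))

def imagRatio (u : ℝ) : ℝ := √(4 * (2 * u) ^ (-(3 : ℝ) / 2) + 1)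

def upperRoot (X y : ℝ) : ℂ :=
  -(1 / 2 : ℂ) * (√(2 * y) : ℂ) *
    (1 - Complex.I * (√(4 * X ^ 2 * (2 * y) ^ (-(3 : ℝ) / 2) + 1) : ℂ))

end

lemma two_mul_two_rpow_neg_one_third : 2 * (2 : ℝ) ^ (-(1 : ℝ) / 3) = 2 ^ ((2 : ℝ) / 3) := by
  rw [show (2 : ℝ) / 3 = 1 + -(1 : ℝ) / 3 by norm_num, rpow_add two_pos, rpow_one]

lemma cardanoProfile_zero (c : ℝ) : cardanoProfile c 0 = 2 ^ (-(1 : ℝ) / 3) := by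
  rw [cardanoProfile]
  norm_num
  rw [← rpow_add two_pos]
  norm_num

lemma modulusProfile_two_rpow : modulusProfile (2 ^ (-(1 : ℝ) / 3)) = 2 ^ ((1 : ℝ) / 3) := by
  have h : (2 * (2 : ℝ) ^ (-(1 : ℝ) / 3)) ^ (-(1 : ℝ) / 2) = 2 ^ (-(1 : ℝ) / 3) := by
    rw [two_mul_two_rpow_neg_one_third, ← rpow_mul zero_le_two]
    norm_num
  rw [modulusProfile, h, ← two_mul, two_mul_two_rpow_neg_one_third, sqrt_eq_rpow,
    ← rpow_mul zero_le_two]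
  norm_num

lemma imagRatio_two_rpow : imagRatio (2 ^ (-(1 : ℝ) / 3)) = √3 := by
  rw [imagRatio, two_mul_two_rpow_neg_one_third, ← rpow_mul zero_le_two]
  norm_num

lemma hasDerivAt_sqrt_one_add_mul_cube (c : ℝ) :
    HasDerivAt (fun t => √(1 + c * t ^ 3)) 0 0 := by
  have h := (((hasDerivAt_pow 3 (0 : ℝ)).const_mul c).const_add 1).sqrt (by norm_num)
  simpa using h

lemma hasDerivAt_cardanoProfile {c : ℝ} (hc : 0 < c) :
    HasDerivAt (cardanoProfile c) (-(2 ^ (-(2 : ℝ) / 3) * (c / 2) ^ ((1 : ℝ) / 3))) 0 := by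
  have hs := (hasDerivAt_sqrt_one_add_mul_cube c).add_const 1
  have hs0 : √(1 + c * 0 ^ 3) + 1 = 2 := by norm_num
  have hA := hs.rpow_const (p := (1 : ℝ) / 3) (by rw [hs0]; norm_num)
  have hq : HasDerivAt (fun t => c / (√(1 + c * t ^ 3) + 1)) 0 0 := by
    simpa using (hasDerivAt_const (0 : ℝ) c).fun_div hs (by rw [hs0]; norm_num)
  have hB := (hasDerivAt_id' (0 : ℝ)).fun_mul
    (hq.rpow_const (p := (1 : ℝ) / 3) (by rw [hs0]; left; positivity))
  exact ((hA.fun_sub hB).const_mul (2 ^ (-(2 : ℝ) / 3))).congr_deriv (by norm_num)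

lemma hasDerivAt_modulusProfile {u : ℝ} (hu : 0 < u) :
    HasDerivAt modulusProfile ((1 - (2 * u) ^ (-(3 : ℝ) / 2)) / (2 * modulusProfile u)) u := by
  have h2u : (0 : ℝ) < 2 * u := by positivity
  have hg : HasDerivAt (fun v => v + (2 * v) ^ (-(1 : ℝ) / 2))
      (1 - (2 * u) ^ (-(3 : ℝ) / 2)) u := by
    have h := (hasDerivAt_id' u).fun_add
      (((hasDerivAt_id' u).const_mul 2).rpow_const (p := -(1 : ℝ) / 2) (Or.inl h2u.ne'))
    rw [show -(1 : ℝ) / 2 - 1 = -(3 : ℝ) / 2 by norm_num] at h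
    exact h.congr_deriv (by ring)
  exact hg.sqrt (by positivity)

lemma hasDerivAt_modulusProfile_comp_cardanoProfile {κ : ℝ} (hκ : 0 < κ) :
    HasDerivAt (fun t => modulusProfile (cardanoProfile (16 / 27 * κ ^ 3) t)) (-κ / 12) 0 := by
  have hf := hasDerivAt_cardanoProfile (c := 16 / 27 * κ ^ 3) (by positivity)
  have hg := hasDerivAt_modulusProfile (u := cardanoProfile (16 / 27 * κ ^ 3) 0)
    (by rw [cardanoProfile_zero]; positivity)
  refine (hg.comp 0 hf).congr_deriv ?_
  have hcube : (16 / 27 * κ ^ 3 / 2) ^ ((1 : ℝ) / 3) = 2 * κ / 3 := by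
    rw [show 16 / 27 * κ ^ 3 / 2 = (2 * κ / 3) ^ (3 : ℝ) by norm_cast; ring,
      ← rpow_mul (by positivity)]
    norm_num
  have hhalf : (2 * (2 : ℝ) ^ (-(1 : ℝ) / 3)) ^ (-(3 : ℝ) / 2) = 1 / 2 := by
    rw [two_mul_two_rpow_neg_one_third, ← rpow_mul zero_le_two]
    norm_num
  have hsplit : (2 : ℝ) ^ (-(2 : ℝ) / 3) = 2 ^ ((1 : ℝ) / 3) / 2 := by
    rw [eq_div_iff two_ne_zero, show (1 : ℝ) / 3 = -(2 : ℝ) / 3 + 1 by norm_num,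
      rpow_add two_pos, rpow_one]
  rw [cardanoProfile_zero, hhalf, modulusProfile_two_rpow, hcube, hsplit]
  field_simp
  ring

lemma sqrt_one_add_sub_one_rpow_third {c t : ℝ} (hc : 0 ≤ c) (ht : 0 ≤ t) :
    (√(1 + c * t ^ 3) - 1) ^ ((1 : ℝ) / 3)
      = t * (c / (√(1 + c * t ^ 3) + 1)) ^ ((1 : ℝ) / 3) := by
  set s := √(1 + c * t ^ 3)
  have hs : s ^ 2 = 1 + c * t ^ 3 := sq_sqrt (by positivity)
  have hs0 : 0 ≤ s := sqrt_nonneg _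
  have hfactor : s - 1 = t ^ 3 * (c / (s + 1)) := by
    field_simp
    linear_combination hs
  rw [hfactor, mul_rpow (by positivity) (by positivity), ← rpow_natCast, ← rpow_mul ht]
  norm_num

lemma cardanoProfile_pos {c t : ℝ} (hc : 0 ≤ c) (ht : 0 ≤ t) : 0 < cardanoProfile c t := by
  rw [cardanoProfile, ← sqrt_one_add_sub_one_rpow_third hc ht]
  have hs : 1 ≤ √(1 + c * t ^ 3) := one_le_sqrt.mpr (by nlinarith [pow_nonneg ht 3])
  have := rpow_lt_rpow (by linarith) (by linarith : √(1 + c * t ^ 3) - 1 < √(1 + c * t ^ 3) + 1)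
    (by norm_num : (0 : ℝ) < 1 / 3)
  exact mul_pos (by positivity) (by linarith)

lemma cardanoFormula_eq_rpow_mul_cardanoProfile {c X : ℝ} (hc : 0 ≤ c) (hX : 0 < X) :
    2 ^ (-(2 : ℝ) / 3) * X ^ ((4 : ℝ) / 3) *
        (((1 + c / X ^ 2) ^ ((1 : ℝ) / 2) + 1) ^ ((1 : ℝ) / 3)
          - ((1 + c / X ^ 2) ^ ((1 : ℝ) / 2) - 1) ^ ((1 : ℝ) / 3))
      = X ^ ((4 : ℝ) / 3) * cardanoProfile c (X ^ (-(2 : ℝ) / 3)) := by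
  have hcube : c / X ^ 2 = c * (X ^ (-(2 : ℝ) / 3)) ^ 3 := by
    rw [← rpow_natCast (X ^ _) 3, ← rpow_mul hX.le, div_eq_mul_inv, ← rpow_natCast X 2,
      ← rpow_neg hX.le]
    norm_num
  rw [hcube, ← sqrt_eq_rpow, sqrt_one_add_sub_one_rpow_third hc (by positivity), cardanoProfile]
  ring

lemma norm_neg_half_mul_one_sub_I_mul {r : ℝ} (hr : 0 ≤ r) (q : ℝ) :
    ‖-(1 / 2 : ℂ) * r * (1 - Complex.I * q)‖ = r / 2 * √(1 + q ^ 2) := by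
  have h : ‖1 - Complex.I * q‖ = √(1 + q ^ 2) := by
    rw [Complex.norm_def, Complex.normSq_apply]
    simp
    ring_nf
  rw [norm_mul, norm_mul, norm_neg, norm_div, norm_one, Complex.norm_ofNat, Complex.norm_real,
    norm_of_nonneg hr, h]
  ring

lemma arg_neg_half_mul_one_sub_I_mul {r q : ℝ} (hr : 0 < r) (hq : 0 ≤ q) :
    Complex.arg (-(1 / 2 : ℂ) * r * (1 - Complex.I * q)) = π - arctan q := by
  set z : ℂ := -(1 / 2 : ℂ) * r * (1 - Complex.I * q)
  have hre : z.re = -(r / 2) := by simp [z]; ring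
  have him : z.im = r / 2 * q := by simp [z, div_eq_inv_mul]
  rw [Complex.arg_of_re_neg_of_im_nonneg (by rw [hre]; linarith) (by rw [him]; positivity),
    Complex.neg_im, him, norm_neg_half_mul_one_sub_I_mul hr.le,
    show -(r / 2 * q) / (r / 2 * √(1 + q ^ 2)) = -(q / √(1 + q ^ 2)) by field_simp,
    arcsin_neg, ← arctan_eq_arcsin]
  ring

lemma upperRoot_rpow_mul {X u : ℝ} (hX : 0 < X) (hu : 0 ≤ u) :
    upperRoot X (X ^ ((4 : ℝ) / 3) * u)
      = -(1 / 2 : ℂ) * ((X ^ ((2 : ℝ) / 3) * √(2 * u) : ℝ) : ℂ)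
          * (1 - Complex.I * (imagRatio u : ℂ)) := by
  have hX43 : 0 ≤ X ^ ((4 : ℝ) / 3) := by positivity
  have hsqrt : √(2 * (X ^ ((4 : ℝ) / 3) * u)) = X ^ ((2 : ℝ) / 3) * √(2 * u) := by
    rw [mul_left_comm, sqrt_mul hX43, sqrt_eq_rpow, ← rpow_mul hX.le]
    norm_num
  have hpow : X ^ 2 * (2 * (X ^ ((4 : ℝ) / 3) * u)) ^ (-(3 : ℝ) / 2)
      = (2 * u) ^ (-(3 : ℝ) / 2) := by
    rw [mul_left_comm, mul_rpow hX43 (by positivity), ← rpow_mul hX.le, ← mul_assoc,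
      ← rpow_natCast X 2, ← rpow_add hX]
    norm_num
  rw [upperRoot, imagRatio, hsqrt, mul_assoc 4, hpow]

lemma sqrt_two_mul_mul_sqrt_one_add_imagRatio_sq {u : ℝ} (hu : 0 < u) :
    √(2 * u) / 2 * √(1 + imagRatio u ^ 2) = modulusProfile u := by
  have h2u : 0 < 2 * u := by positivity
  have hrat : 2 * u * (2 * u) ^ (-(3 : ℝ) / 2) = (2 * u) ^ (-(1 : ℝ) / 2) := by
    rw [← rpow_one_add' h2u.le (by norm_num)]
    norm_num
  have hsq : u + (2 * u) ^ (-(1 : ℝ) / 2)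
      = 2 * u * (1 + (4 * (2 * u) ^ (-(3 : ℝ) / 2) + 1)) / 2 ^ 2 := by
    linear_combination -hrat
  rw [imagRatio, sq_sqrt (by positivity), modulusProfile, hsq,
    sqrt_div' _ (by positivity), sqrt_sq zero_le_two, sqrt_mul h2u.le]
  ring

lemma norm_upperRoot_rpow_mul {X u : ℝ} (hX : 0 < X) (hu : 0 < u) :
    ‖upperRoot X (X ^ ((4 : ℝ) / 3) * u)‖ = X ^ ((2 : ℝ) / 3) * modulusProfile u := by
  rw [upperRoot_rpow_mul hX hu.le, norm_neg_half_mul_one_sub_I_mul (by positivity),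
    ← sqrt_two_mul_mul_sqrt_one_add_imagRatio_sq hu]
  ring

lemma arg_upperRoot_rpow_mul {X u : ℝ} (hX : 0 < X) (hu : 0 < u) :
    Complex.arg (upperRoot X (X ^ ((4 : ℝ) / 3) * u)) = π - arctan (imagRatio u) := by
  rw [upperRoot_rpow_mul hX hu.le]
  exact arg_neg_half_mul_one_sub_I_mul (by positivity) (sqrt_nonneg _)

lemma continuousAt_imagRatio {u : ℝ} (hu : 0 < u) : ContinuousAt imagRatio u := by
  have h2u : 2 * u ≠ 0 := by positivity
  exact
    ((((continuousAt_id.const_mul 2).rpow_const (Or.inl h2u)).const_mul 4).add_const 1).sqrt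

lemma tendsto_two_mul_add_one_rpow_neg_two_thirds :
    Tendsto (fun n : ℕ => (2 * (n : ℝ) + 1) ^ (-(2 : ℝ) / 3)) atTop (𝓝[≠] 0) := by
  have hXtop : Tendsto (fun n : ℕ => 2 * (n : ℝ) + 1) atTop atTop :=
    tendsto_atTop_add_const_right _ _ (tendsto_natCast_atTop_atTop.const_mul_atTop two_pos)
  refine tendsto_nhdsWithin_iff.mpr
    ⟨?_, .of_forall fun n => (by positivity : (0 : ℝ) < _).ne'⟩
  exact ((tendsto_rpow_neg_atTop (by norm_num : (0 : ℝ) < 2 / 3)).comp hXtop).congr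
    fun n => by simp [neg_div]

theorem stmt18 (κ : ℝ) (hκ : 0 < κ) (κn yn ynp : ℕ → ℝ) (lami : ℕ → ℂ)
    (hκn : ∀ n : ℕ, κn n = 16 / 27 * κ ^ 3 / (2 * (n : ℝ) + 1) ^ 2)
    (hyn : ∀ n : ℕ, yn n = (2 : ℝ) ^ (-(2 : ℝ) / 3) * (2 * (n : ℝ) + 1) ^ ((4 : ℝ) / 3) *
        (((1 + κn n) ^ ((1 : ℝ) / 2) + 1) ^ ((1 : ℝ) / 3)
          - ((1 + κn n) ^ ((1 : ℝ) / 2) - 1) ^ ((1 : ℝ) / 3)))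
    (hynp : ∀ n : ℕ,
      ynp n = Real.sqrt (4 * (2 * (n : ℝ) + 1) ^ 2 * (2 * yn n) ^ (-(3 : ℝ) / 2) + 1))
    (hlam : ∀ n : ℕ,
      lami n = -(1 / 2 : ℂ) * (Real.sqrt (2 * yn n) : ℂ) * (1 - Complex.I * (ynp n : ℂ))) :
    Tendsto (fun n : ℕ =>
        ‖lami n‖ - (2 : ℝ) ^ ((1 : ℝ) / 3) * (2 * (n : ℝ) + 1) ^ ((2 : ℝ) / 3))
      atTop (nhds (-κ / 12)) ∧
    Tendsto (fun n : ℕ => Complex.arg (lami n)) atTop (nhds (2 * Real.pi / 3)) := by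
  set c : ℝ := 16 / 27 * κ ^ 3
  have hc : 0 < c := by positivity
  have hX : ∀ n : ℕ, 0 < 2 * (n : ℝ) + 1 := fun n => by positivity
  set τ : ℕ → ℝ := fun n => (2 * (n : ℝ) + 1) ^ (-(2 : ℝ) / 3) with hτ_def
  have hu : ∀ n, 0 < cardanoProfile c (τ n) := fun n =>
    cardanoProfile_pos hc.le (by positivity)
  have hlam_eq : ∀ n, lami n
      = upperRoot (2 * n + 1) ((2 * (n : ℝ) + 1) ^ ((4 : ℝ) / 3) * cardanoProfile c (τ n)) := by
    intro n
    rw [hlam, hynp, hyn, hκn, cardanoFormula_eq_rpow_mul_cardanoProfile hc.le (hX n)]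
    rfl
  have hτ : Tendsto τ atTop (𝓝[≠] 0) := tendsto_two_mul_add_one_rpow_neg_two_thirds
  constructor
  · refine ((hasDerivAt_iff_tendsto_slope_zero.mp
      (hasDerivAt_modulusProfile_comp_cardanoProfile hκ)).comp hτ).congr fun n => ?_
    have hτ_inv : (τ n)⁻¹ = (2 * (n : ℝ) + 1) ^ ((2 : ℝ) / 3) := by
      rw [hτ_def, ← rpow_neg (hX n).le]
      norm_num
    rw [Function.comp_apply, hlam_eq, norm_upperRoot_rpow_mul (hX n) (hu n), zero_add,
      cardanoProfile_zero, modulusProfile_two_rpow, smul_eq_mul, hτ_inv]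
    ring
  · have hf : Tendsto (fun n => cardanoProfile c (τ n)) atTop (𝓝 (2 ^ (-(1 : ℝ) / 3))) := by
      rw [← cardanoProfile_zero c]
      exact (hasDerivAt_cardanoProfile hc).continuousAt.tendsto.comp
        (hτ.mono_right nhdsWithin_le_nhds)
    have harctan := (continuous_arctan.tendsto _).comp
      ((continuousAt_imagRatio (by positivity)).tendsto.comp hf)
    rw [imagRatio_two_rpow, arctan_sqrt_three] at harctan
    have hlim := (tendsto_const_nhds (x := π)).sub harctan
    rw [show π - π / 3 = 2 * π / 3 by ring] at hlim
    exact hlim.congr fun n => by rw [hlam_eq, arg_upperRoot_rpow_mul (hX n) (hu n)]; rfl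
end
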